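/- Suppose s : 𝒳 → 𝒮 and t : 𝒴 → 𝒯 are both sufficient. Then C_W(p) equals the infimum, over all n ∈ ℕ and joint pmfs q on 𝒳 × 𝒴 × Fin n whose (𝒳,𝒴)-marginal is p and which satisfy both (i) W−(S,T)−(X,Y): q(x,y,w)·pST(s(x),t(y)) = p(x,y)·qSTW(s(x),t(y),w) for all x,y,w, where qSTW(s0,t0,w) = ∑_{x : s(x)=s0, y : t(y)=t0} q(x,y,w), and (ii) the chain X−S−W−T−Y: q(x,y,w)·pS(s(x))·pT(t(y))·qW(w) = pX(x)·pY(y)·qSW(s(x),w)·qTW(t(y),w) for all x,y,w (with qW, qSW, qTW the corresponding marginals), of the mutual information I_q(W;(S,T)) computed from the joint distribution of ((s(x),t(y)), w). -/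

import Mathlib

open Finset

noncomputable section
open scoped Classical

variable {𝒳 𝒴 𝒮 𝒯 : Type*}

/-- Marginal of a joint pmf on the first coordinate. -/
def margX [Fintype 𝒴] (p : 𝒳 × 𝒴 → ℝ) (x : 𝒳) : ℝ := ∑ y, p (x, y)

/-- Marginal of a joint pmf on the second coordinate. -/
def margY [Fintype 𝒳] (p : 𝒳 × 𝒴 → ℝ) (y : 𝒴) : ℝ := ∑ x, p (x, y)

/-- Distribution of `S = s(X)`. -/
def margS [Fintype 𝒳] [Fintype 𝒴] (p : 𝒳 × 𝒴 → ℝ) (s : 𝒳 → 𝒮) (s0 : 𝒮) : ℝ :=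
  ∑ x ∈ Finset.univ.filter (fun x => s x = s0), margX p x

/-- Distribution of `T = t(Y)`. -/
def margT [Fintype 𝒳] [Fintype 𝒴] (p : 𝒳 × 𝒴 → ℝ) (t : 𝒴 → 𝒯) (t0 : 𝒯) : ℝ :=
  ∑ y ∈ Finset.univ.filter (fun y => t y = t0), margY p y

/-- Joint distribution of `(S, T) = (s(X), t(Y))`. -/
def margST [Fintype 𝒳] [Fintype 𝒴] (p : 𝒳 × 𝒴 → ℝ) (s : 𝒳 → 𝒮) (t : 𝒴 → 𝒯)
    (w : 𝒮 × 𝒯) : ℝ :=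
  ∑ x ∈ Finset.univ.filter (fun x => s x = w.1),
    ∑ y ∈ Finset.univ.filter (fun y => t y = w.2), p (x, y)

/-- `q` is a probability mass function. -/
def IsPMF {Z : Type*} [Fintype Z] (q : Z → ℝ) : Prop := (∀ z, 0 ≤ q z) ∧ ∑ z, q z = 1

/-- `s` is a sufficient statistic of `X` for `Y` (Markov chain `X - S - Y`). -/
def SuffS [Fintype 𝒴] (p : 𝒳 × 𝒴 → ℝ) (s : 𝒳 → 𝒮) : Prop :=
  ∀ x x' y, s x = s x' → p (x, y) * margX p x' = p (x', y) * margX p x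

/-- `t` is a sufficient statistic of `Y` for `X` (Markov chain `X - T - Y`). -/
def SuffT [Fintype 𝒳] (p : 𝒳 × 𝒴 → ℝ) (t : 𝒴 → 𝒯) : Prop :=
  ∀ x y y', t y = t y' → p (x, y) * margY p y' = p (x, y') * margY p y

/-- Mutual information of a joint pmf on `A × B`. -/
def mutInfo {A B : Type*} [Fintype A] [Fintype B] (q : A × B → ℝ) : ℝ :=
  ∑ z : A × B, if 0 < q z then
    q z * Real.log (q z / ((∑ b, q (z.1, b)) * (∑ a, q (a, z.2)))) else 0

/-- Shannon entropy of a pmf on a finite type. -/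
def entropy {W : Type*} [Fintype W] (r : W → ℝ) : ℝ :=
  -∑ w, if 0 < r w then r w * Real.log (r w) else 0

/-- Wyner's common information of a joint pmf `m` on `A × B`. -/
def wynerCI {A B : Type*} [Fintype A] [Fintype B] (m : A × B → ℝ) : ℝ :=
  sInf { c | ∃ (n : ℕ) (q : A × B × Fin n → ℝ),
    IsPMF q ∧
    (∀ a b, ∑ w, q (a, b, w) = m (a, b)) ∧
    (∀ a b w, q (a, b, w) * (∑ a', ∑ b', q (a', b', w)) =
      (∑ b', q (a, b', w)) * (∑ a', q (a', b, w))) ∧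
    c = mutInfo (fun z : Fin n × (A × B) => q (z.2.1, z.2.2, z.1)) }

/-- Gács–Körner common information of a joint pmf `m` on `A × B`. -/
def gkCI {A B : Type*} [Fintype A] [Fintype B] (m : A × B → ℝ) : ℝ :=
  sSup { c | ∃ (n : ℕ) (f : A → Fin n) (g : B → Fin n),
    (∑ z : A × B, if f z.1 ≠ g z.2 then m z else 0) = 0 ∧
    c = entropy (fun w : Fin n =>
      ∑ a ∈ Finset.univ.filter (fun a => f a = w), ∑ b, m (a, b)) }

/-- Information-bottleneck Lagrangian value. -/
def ibL {A B : Type*} [Fintype A] [Fintype B] (m : A × B → ℝ) (β : ℝ) : ℝ :=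
  sInf { c | ∃ (n : ℕ) (r : A → Fin n → ℝ),
    (∀ a u, 0 ≤ r a u) ∧ (∀ a, ∑ u, r a u = 1) ∧
    c = mutInfo (fun z : Fin n × A => r z.2 z.1 * ∑ b, m (z.2, b))
        - β * mutInfo (fun z : Fin n × B => ∑ a, r a z.1 * m (a, z.2)) }

/-- Information-bottleneck curve. -/
def ibCurve {A B : Type*} [Fintype A] [Fintype B] (m : A × B → ℝ) (R : ℝ) : ℝ :=
  sSup { c | ∃ (n : ℕ) (r : A → Fin n → ℝ),
    (∀ a u, 0 ≤ r a u) ∧ (∀ a, ∑ u, r a u = 1) ∧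
    mutInfo (fun z : Fin n × A => r z.2 z.1 * ∑ b, m (z.2, b)) ≤ R ∧
    c = mutInfo (fun z : Fin n × B => ∑ a, r a z.1 * m (a, z.2)) }


/-- Joint distribution of `(S, T, W) = (s(X), t(Y), W)` induced by a joint pmf `q`
on `𝒳 × 𝒴 × 𝒲`. -/
def margSTW {𝒲 : Type*} [Fintype 𝒳] [Fintype 𝒴] [Fintype 𝒲]
    (q : 𝒳 × 𝒴 × 𝒲 → ℝ) (s : 𝒳 → 𝒮) (t : 𝒴 → 𝒯) (s0 : 𝒮) (t0 : 𝒯) (w : 𝒲) : ℝ :=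
  ∑ x ∈ Finset.univ.filter (fun x => s x = s0),
    ∑ y ∈ Finset.univ.filter (fun y => t y = t0), q (x, y, w)


/-!
Given a coupling `q` of `p` with an auxiliary `W` that makes `X` and `Y` conditionally
independent, keep the law of `(S, T, W)` and redraw `X` and `Y` independently from `p(x | s)` and
`p(y | t)`. Sufficiency makes the result again a coupling of `p`; it satisfies
`W - (S, T) - (X, Y)` and `X - S - W - T - Y`, and its cost `I(W; S, T)` is that of `q`, which is
at most `I(W; X, Y)` by data processing. Conversely, under the two restricted Markov conditions
`q` is its own lift, so `X` and `Y` are conditionally independent given `W`, and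
`W - (S, T) - (X, Y)` turns the data-processing inequality into an equality. Each cost in either
infimum is therefore bounded below by a cost in the other.
-/

lemma mul_log_le_mul_log_div {a b k : ℝ} (ha : 0 ≤ a) (hb : 0 ≤ b) (hab : 0 < a → 0 < b)
    (hk : 0 < k) : a * Real.log k + a - b * k ≤ a * Real.log (a / b) := by
  rcases ha.eq_or_lt with rfl | ha
  · simpa using mul_nonneg hb hk.le
  have hb := hab ha
  have hlog : 1 - (a / (b * k))⁻¹ ≤ Real.log (a / (b * k)) :=
    Real.one_sub_inv_le_log_of_pos (by positivity)
  rw [Real.log_div ha.ne' (by positivity), Real.log_mul hb.ne' hk.ne', inv_div] at hlog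
  rw [Real.log_div ha.ne' hb.ne']
  have : a * (1 - b * k / a) = a - b * k := by field_simp
  nlinarith

lemma log_sum_inequality {ι : Type*} (I : Finset ι) (a b : ι → ℝ) (ha : ∀ i ∈ I, 0 ≤ a i)
    (hb : ∀ i ∈ I, 0 ≤ b i) (hab : ∀ i ∈ I, 0 < a i → 0 < b i) :
    (∑ i ∈ I, a i) * Real.log ((∑ i ∈ I, a i) / ∑ i ∈ I, b i)
      ≤ ∑ i ∈ I, a i * Real.log (a i / b i) := by
  rcases (sum_nonneg ha).eq_or_lt with hA | hA
  · have ha0 : ∀ i ∈ I, a i = 0 := (sum_eq_zero_iff_of_nonneg ha).1 hA.symm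
    rw [← hA, zero_mul, sum_eq_zero fun i hi => by simp [ha0 i hi]]
  obtain ⟨i, hi, hai⟩ := exists_lt_of_sum_lt (f := fun _ => (0 : ℝ)) (by simpa using hA)
  have hB : 0 < ∑ i ∈ I, b i := (hab i hi hai).trans_le (single_le_sum hb hi)
  calc (∑ i ∈ I, a i) * Real.log ((∑ i ∈ I, a i) / ∑ i ∈ I, b i)
      = ∑ i ∈ I, (a i * Real.log ((∑ i ∈ I, a i) / ∑ i ∈ I, b i) + a i
          - b i * ((∑ i ∈ I, a i) / ∑ i ∈ I, b i)) := by
        rw [sum_sub_distrib, sum_add_distrib, ← sum_mul, ← sum_mul]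
        field_simp
        ring
    _ ≤ ∑ i ∈ I, a i * Real.log (a i / b i) :=
        sum_le_sum fun i hi => mul_log_le_mul_log_div (ha i hi) (hb i hi) (hab i hi) (by positivity)

section MutualInformation

variable {A B C : Type*}

lemma le_margX [Fintype B] {r : A × B → ℝ} (hr : ∀ z, 0 ≤ r z) (a : A) (b : B) :
    r (a, b) ≤ margX r a :=
  single_le_sum (fun b _ => hr (a, b)) (mem_univ b)

lemma le_margY [Fintype A] {r : A × B → ℝ} (hr : ∀ z, 0 ≤ r z) (a : A) (b : B) :
    r (a, b) ≤ margY r b :=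
  single_le_sum (fun a _ => hr (a, b)) (mem_univ a)

lemma mutInfo_eq_sum [Fintype A] [Fintype B] {r : A × B → ℝ} (hr : ∀ z, 0 ≤ r z) :
    mutInfo r = ∑ z, r z * Real.log (r z / (margX r z.1 * margY r z.2)) := by
  refine sum_congr rfl fun z _ => ?_
  split_ifs with h
  · rfl
  · simp [le_antisymm (not_lt.1 h) (hr z)]

lemma mutInfo_comp_swap [Fintype A] [Fintype B] (r : A × B → ℝ) :
    mutInfo (r ∘ Prod.swap) = mutInfo r :=
  Fintype.sum_equiv (Equiv.prodComm B A) _ _ fun z => by simp [mul_comm]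

/-- The joint law of `(a, f b)` when `(a, b)` has law `r`. -/
def mapSnd [Fintype B] (f : B → C) (r : A × B → ℝ) : A × C → ℝ :=
  fun z => ∑ b ∈ univ.filter (fun b => f b = z.2), r (z.1, b)

variable [Fintype B] (f : B → C) {r : A × B → ℝ}

lemma mapSnd_nonneg (hr : ∀ z, 0 ≤ r z) (z : A × C) : 0 ≤ mapSnd f r z :=
  sum_nonneg fun _ _ => hr _

lemma margY_mapSnd [Fintype A] (c : C) :
    margY (mapSnd f r) c = ∑ b ∈ univ.filter (fun b => f b = c), margY r b := by
  simp only [margY, mapSnd]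
  exact sum_comm

variable [Fintype C]

lemma margX_mapSnd (a : A) : margX (mapSnd f r) a = margX r a :=
  sum_fiberwise univ f fun b => r (a, b)

variable [Fintype A]

lemma mutInfo_eq_sum_fiberwise (hr : ∀ z, 0 ≤ r z) :
    mutInfo r = ∑ a, ∑ c, ∑ b ∈ univ.filter (fun b => f b = c),
      r (a, b) * Real.log (r (a, b) / (margX r a * margY r b)) := by
  rw [mutInfo_eq_sum hr, Fintype.sum_prod_type]
  exact sum_congr rfl fun a _ => (sum_fiberwise univ f _).symm

lemma mutInfo_mapSnd_eq_sum (hr : ∀ z, 0 ≤ r z) :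
    mutInfo (mapSnd f r) = ∑ a, ∑ c, mapSnd f r (a, c) * Real.log (mapSnd f r (a, c) /
      (margX r a * ∑ b ∈ univ.filter (fun b => f b = c), margY r b)) := by
  rw [mutInfo_eq_sum (mapSnd_nonneg f hr), Fintype.sum_prod_type]
  simp only [margX_mapSnd, margY_mapSnd]

theorem mutInfo_mapSnd_le (hr : ∀ z, 0 ≤ r z) : mutInfo (mapSnd f r) ≤ mutInfo r := by
  rw [mutInfo_mapSnd_eq_sum f hr, mutInfo_eq_sum_fiberwise f hr]
  refine sum_le_sum fun a _ => sum_le_sum fun c _ => ?_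
  rw [mul_sum]
  exact log_sum_inequality _ _ (fun b => margX r a * margY r b) (fun b _ => hr _)
    (fun b _ => mul_nonneg (sum_nonneg fun _ _ => hr _) (sum_nonneg fun _ _ => hr _))
    fun b _ h => mul_pos (h.trans_le (le_margX hr a b)) (h.trans_le (le_margY hr a b))

/-- `hmarkov` says that `A - f B - B` is a Markov chain. -/
theorem mutInfo_mapSnd_eq (hr : ∀ z, 0 ≤ r z)
    (hmarkov : ∀ a b, r (a, b) * margY (mapSnd f r) (f b) = margY r b * mapSnd f r (a, f b)) :
    mutInfo (mapSnd f r) = mutInfo r := by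
  rw [mutInfo_mapSnd_eq_sum f hr, mutInfo_eq_sum_fiberwise f hr]
  refine sum_congr rfl fun a _ => sum_congr rfl fun c _ => ?_
  refine (sum_mul _ _ _).trans (sum_congr rfl fun b hb => ?_)
  obtain rfl : f b = c := (mem_filter.1 hb).2
  rcases (hr (a, b)).eq_or_lt with h | h
  · simp [← h]
  have hX : 0 < margX r a := h.trans_le (le_margX hr a b)
  have hY : 0 < margY r b := h.trans_le (le_margY hr a b)
  have hYf : 0 < margY (mapSnd f r) (f b) := by
    rw [margY_mapSnd]
    exact hY.trans_le (single_le_sum (f := margY r) (fun _ _ => sum_nonneg fun _ _ => hr _)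
      (mem_filter.2 ⟨mem_univ _, rfl⟩))
  rw [← margY_mapSnd]
  congr 2
  rw [div_eq_div_iff (by positivity) (by positivity)]
  linear_combination -margX r a * hmarkov a b

end MutualInformation

lemma exists_eq_of_sum_filter_ne_zero {α β : Type*} [Fintype α] {f : α → β} {g : α → ℝ} {b : β}
    (h : ∑ a ∈ univ.filter (fun a => f a = b), g a ≠ 0) : ∃ a, f a = b := by
  obtain ⟨a, ha, -⟩ := exists_ne_zero_of_sum_ne_zero h
  exact ⟨a, (mem_filter.1 ha).2⟩

lemma sum_mul_div_sum_fiberwise {α β : Type*} [Fintype α] [Fintype β] (f : α → β) (u : α → ℝ)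
    (g : β → ℝ) (hg : ∀ b, g b ≠ 0 → ∑ a ∈ univ.filter (fun a => f a = b), u a ≠ 0) :
    ∑ a, u a * g (f a) / ∑ a' ∈ univ.filter (fun a' => f a' = f a), u a' = ∑ b, g b := by
  rw [← sum_fiberwise univ f]
  refine sum_congr rfl fun b _ => ?_
  calc ∑ a ∈ univ.filter (fun a => f a = b),
        u a * g (f a) / ∑ a' ∈ univ.filter (fun a' => f a' = f a), u a'
      = (∑ a ∈ univ.filter (fun a => f a = b), u a) * g b
          / ∑ a ∈ univ.filter (fun a => f a = b), u a := by
        rw [sum_mul, sum_div]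
        exact sum_congr rfl fun a ha => by rw [(mem_filter.1 ha).2]
    _ = g b := mul_div_cancel_left_of_imp (not_imp_not.1 (hg b))

section Markov

variable {W : Type*}

def margW [Fintype 𝒳] [Fintype 𝒴] (q : 𝒳 × 𝒴 × W → ℝ) (w : W) : ℝ := ∑ x, ∑ y, q (x, y, w)

def margXW [Fintype 𝒴] (q : 𝒳 × 𝒴 × W → ℝ) (x : 𝒳) (w : W) : ℝ := ∑ y, q (x, y, w)

def margYW [Fintype 𝒳] (q : 𝒳 × 𝒴 × W → ℝ) (y : 𝒴) (w : W) : ℝ := ∑ x, q (x, y, w)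

def margSW [Fintype 𝒳] [Fintype 𝒴] (q : 𝒳 × 𝒴 × W → ℝ) (s : 𝒳 → 𝒮) (a : 𝒮) (w : W) : ℝ :=
  ∑ x ∈ univ.filter (fun x => s x = a), margXW q x w

def margTW [Fintype 𝒳] [Fintype 𝒴] (q : 𝒳 × 𝒴 × W → ℝ) (t : 𝒴 → 𝒯) (b : 𝒯) (w : W) : ℝ :=
  ∑ y ∈ univ.filter (fun y => t y = b), margYW q y w

def IsCondIndep [Fintype 𝒳] [Fintype 𝒴] (q : 𝒳 × 𝒴 × W → ℝ) : Prop :=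
  ∀ x y w, q (x, y, w) * margW q w = margXW q x w * margYW q y w

def IsCondIndepST [Fintype 𝒳] [Fintype 𝒴] [Fintype W] (q : 𝒳 × 𝒴 × W → ℝ) (s : 𝒳 → 𝒮)
    (t : 𝒴 → 𝒯) : Prop :=
  ∀ x y w, margSTW q s t (s x) (t y) w * margW q w = margSW q s (s x) w * margTW q t (t y) w

/-- The Markov chain `X - S - W - T - Y`. -/
def IsMarkovSWT [Fintype 𝒳] [Fintype 𝒴] (p : 𝒳 × 𝒴 → ℝ) (s : 𝒳 → 𝒮) (t : 𝒴 → 𝒯)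
    (q : 𝒳 × 𝒴 × W → ℝ) : Prop :=
  ∀ x y w, q (x, y, w) * margS p s (s x) * margT p t (t y) * margW q w
    = margX p x * margY p y * margSW q s (s x) w * margTW q t (t y) w

/-- Keep the law of `(S, T, W)` and draw `X` and `Y` independently from `p(x | s)` and
`p(y | t)`. -/
def liftST [Fintype 𝒳] [Fintype 𝒴] [Fintype W] (p : 𝒳 × 𝒴 → ℝ) (s : 𝒳 → 𝒮) (t : 𝒴 → 𝒯)
    (q : 𝒳 × 𝒴 × W → ℝ) : 𝒳 × 𝒴 × W → ℝ := fun z =>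
  margX p z.1 * margY p z.2.1 * margSTW q s t (s z.1) (t z.2.1) z.2.2
    / (margS p s (s z.1) * margT p t (t z.2.1))

variable [Fintype 𝒳] [Fintype 𝒴] {p : 𝒳 × 𝒴 → ℝ} {s : 𝒳 → 𝒮} {t : 𝒴 → 𝒯}
  {q : 𝒳 × 𝒴 × W → ℝ}

lemma margW_eq_sum_margSW [Fintype 𝒮] (w : W) : margW q w = ∑ a, margSW q s a w :=
  (sum_fiberwise univ s _).symm

lemma mul_margS_mul_margT (hs : SuffS p s) (ht : SuffT p t) (x : 𝒳) (y : 𝒴) :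
    p (x, y) * margS p s (s x) * margT p t (t y)
      = margX p x * margY p y * margST p s t (s x, t y) := by
  simp only [margS, margT, margST, mul_sum, sum_mul]
  rw [sum_comm]
  refine sum_congr rfl fun x' hx' => sum_congr rfl fun y' hy' => ?_
  have hx := hs x x' y (mem_filter.1 hx').2.symm
  have hy := ht x' y y' (mem_filter.1 hy').2.symm
  linear_combination margY p y' * hx + margX p x * hy

lemma margS_pos (hX : ∀ x, 0 < margX p x) (s : 𝒳 → 𝒮) (x : 𝒳) : 0 < margS p s (s x) :=
  (hX x).trans_le (single_le_sum (fun x _ => (hX x).le) (mem_filter.2 ⟨mem_univ x, rfl⟩))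

lemma margT_pos (hY : ∀ y, 0 < margY p y) (t : 𝒴 → 𝒯) (y : 𝒴) : 0 < margT p t (t y) :=
  (hY y).trans_le (single_le_sum (fun y _ => (hY y).le) (mem_filter.2 ⟨mem_univ y, rfl⟩))

variable [Fintype W]

lemma exists_of_margSTW_ne_zero {a : 𝒮} {b : 𝒯} {w : W} (h : margSTW q s t a b w ≠ 0) :
    (∃ x, s x = a) ∧ ∃ y, t y = b := by
  obtain ⟨x, hx, h'⟩ := exists_ne_zero_of_sum_ne_zero h
  exact ⟨⟨x, (mem_filter.1 hx).2⟩, exists_eq_of_sum_filter_ne_zero h'⟩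

lemma margSTW_nonneg (hq : ∀ z, 0 ≤ q z) (a : 𝒮) (b : 𝒯) (w : W) : 0 ≤ margSTW q s t a b w :=
  sum_nonneg fun _ _ => sum_nonneg fun _ _ => hq _

lemma le_margSTW (hq : ∀ z, 0 ≤ q z) (x : 𝒳) (y : 𝒴) (w : W) :
    q (x, y, w) ≤ margSTW q s t (s x) (t y) w :=
  (single_le_sum (f := fun y => q (x, y, w)) (fun _ _ => hq _) (by simp)).trans
    (single_le_sum (f := fun x => ∑ y ∈ univ.filter (fun y => t y = t _), q (x, y, w))
      (fun _ _ => sum_nonneg fun _ _ => hq _) (by simp))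

lemma sum_margSTW (hmarg : ∀ x y, ∑ w, q (x, y, w) = p (x, y)) (a : 𝒮) (b : 𝒯) :
    ∑ w, margSTW q s t a b w = margST p s t (a, b) := by
  unfold margSTW margST
  rw [sum_comm]
  refine sum_congr rfl fun x _ => ?_
  rw [sum_comm]
  exact sum_congr rfl fun y _ => hmarg x y

lemma margSTW_le_margST (hq : ∀ z, 0 ≤ q z) (hmarg : ∀ x y, ∑ w, q (x, y, w) = p (x, y))
    (a : 𝒮) (b : 𝒯) (w : W) : margSTW q s t a b w ≤ margST p s t (a, b) :=
  sum_margSTW hmarg a b ▸ single_le_sum (fun w _ => margSTW_nonneg hq a b w) (mem_univ w)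

lemma margSW_eq_sum_margSTW [Fintype 𝒯] (a : 𝒮) (w : W) :
    margSW q s a w = ∑ b, margSTW q s t a b w := by
  unfold margSW margSTW margXW
  symm
  rw [sum_comm]
  exact sum_congr rfl fun x _ => sum_fiberwise univ t fun y => q (x, y, w)

lemma margTW_eq_sum_margSTW [Fintype 𝒮] (b : 𝒯) (w : W) :
    margTW q t b w = ∑ a, margSTW q s t a b w := by
  unfold margTW margSTW margYW
  symm
  rw [sum_congr rfl fun a _ => sum_comm, sum_comm]
  exact sum_congr rfl fun y _ => sum_fiberwise univ s fun x => q (x, y, w)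

end Markov

section Lift

variable {W : Type*} [Fintype 𝒳] [Fintype 𝒴] [Fintype W] {p : 𝒳 × 𝒴 → ℝ} {s : 𝒳 → 𝒮}
  {t : 𝒴 → 𝒯} {q : 𝒳 × 𝒴 × W → ℝ}

lemma liftST_apply (x : 𝒳) (y : 𝒴) (w : W) :
    liftST p s t q (x, y, w) = margX p x * margY p y * margSTW q s t (s x) (t y) w
      / (margS p s (s x) * margT p t (t y)) :=
  rfl

lemma liftST_nonneg (hX : ∀ x, 0 < margX p x) (hY : ∀ y, 0 < margY p y) (hq : ∀ z, 0 ≤ q z)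
    (z : 𝒳 × 𝒴 × W) : 0 ≤ liftST p s t q z :=
  div_nonneg (mul_nonneg (mul_nonneg (hX _).le (hY _).le) (margSTW_nonneg hq _ _ _))
    (mul_pos (margS_pos hX s _) (margT_pos hY t _)).le

lemma margSTW_liftST (hX : ∀ x, 0 < margX p x) (hY : ∀ y, 0 < margY p y) (a : 𝒮) (b : 𝒯) (w : W) :
    margSTW (liftST p s t q) s t a b w = margSTW q s t a b w := by
  have hne : margSTW q s t a b w ≠ 0 → margS p s a * margT p t b ≠ 0 := fun h => by
    obtain ⟨⟨x, rfl⟩, ⟨y, rfl⟩⟩ := exists_of_margSTW_ne_zero h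
    exact (mul_pos (margS_pos hX s x) (margT_pos hY t y)).ne'
  calc margSTW (liftST p s t q) s t a b w
      = ∑ x ∈ univ.filter (fun x => s x = a), ∑ y ∈ univ.filter (fun y => t y = b),
          margX p x * margY p y * (margSTW q s t a b w / (margS p s a * margT p t b)) :=
        sum_congr rfl fun x hx => sum_congr rfl fun y hy => by
          rw [liftST_apply, (mem_filter.1 hx).2, (mem_filter.1 hy).2, mul_div_assoc]
    _ = margS p s a * margT p t b * margSTW q s t a b w / (margS p s a * margT p t b) := by
        rw [mul_div_assoc, margS, margT, sum_mul_sum, sum_mul]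
        simp only [sum_mul]
    _ = margSTW q s t a b w := mul_div_cancel_left_of_imp (not_imp_not.1 hne)

lemma margSW_liftST [Fintype 𝒯] (hX : ∀ x, 0 < margX p x) (hY : ∀ y, 0 < margY p y)
    (a : 𝒮) (w : W) :
    margSW (liftST p s t q) s a w = margSW q s a w := by
  simp only [margSW_eq_sum_margSTW (t := t), margSTW_liftST hX hY]

lemma margTW_liftST [Fintype 𝒮] (hX : ∀ x, 0 < margX p x) (hY : ∀ y, 0 < margY p y)
    (b : 𝒯) (w : W) :
    margTW (liftST p s t q) t b w = margTW q t b w := by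
  simp only [margTW_eq_sum_margSTW (s := s), margSTW_liftST hX hY]

lemma margW_liftST [Fintype 𝒮] [Fintype 𝒯] (hX : ∀ x, 0 < margX p x) (hY : ∀ y, 0 < margY p y)
    (w : W) : margW (liftST p s t q) w = margW q w := by
  simp only [margW_eq_sum_margSW (s := s), margSW_liftST hX hY]

lemma margXW_liftST [Fintype 𝒯] (hY : ∀ y, 0 < margY p y) (x : 𝒳) (w : W) :
    margXW (liftST p s t q) x w = margX p x * margSW q s (s x) w / margS p s (s x) := by
  calc margXW (liftST p s t q) x w
      = margX p x / margS p s (s x)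
          * ∑ y, margY p y * margSTW q s t (s x) (t y) w / margT p t (t y) := by
        rw [margXW, mul_sum]
        exact sum_congr rfl fun y _ => by rw [liftST_apply]; ring
    _ = margX p x / margS p s (s x) * margSW q s (s x) w := by
        rw [margSW_eq_sum_margSTW (t := t)]
        congr 1
        refine sum_mul_div_sum_fiberwise t (margY p) (fun b => margSTW q s t (s x) b w)
          fun b hb => ?_
        obtain ⟨y, rfl⟩ := (exists_of_margSTW_ne_zero hb).2
        exact (margT_pos hY t y).ne'
    _ = margX p x * margSW q s (s x) w / margS p s (s x) := by ring

lemma margYW_liftST [Fintype 𝒮] (hX : ∀ x, 0 < margX p x) (y : 𝒴) (w : W) :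
    margYW (liftST p s t q) y w = margY p y * margTW q t (t y) w / margT p t (t y) := by
  calc margYW (liftST p s t q) y w
      = margY p y / margT p t (t y)
          * ∑ x, margX p x * margSTW q s t (s x) (t y) w / margS p s (s x) := by
        rw [margYW, mul_sum]
        exact sum_congr rfl fun x _ => by rw [liftST_apply]; ring
    _ = margY p y / margT p t (t y) * margTW q t (t y) w := by
        rw [margTW_eq_sum_margSTW (s := s)]
        congr 1
        refine sum_mul_div_sum_fiberwise s (margX p) (fun a => margSTW q s t a (t y) w)
          fun a ha => ?_
        obtain ⟨x, rfl⟩ := (exists_of_margSTW_ne_zero ha).1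
        exact (margS_pos hX s x).ne'
    _ = margY p y * margTW q t (t y) w / margT p t (t y) := by ring

lemma liftST_mul_margST (hs : SuffS p s) (ht : SuffT p t) (hX : ∀ x, 0 < margX p x)
    (hY : ∀ y, 0 < margY p y) (x : 𝒳) (y : 𝒴) (w : W) :
    liftST p s t q (x, y, w) * margST p s t (s x, t y)
      = p (x, y) * margSTW q s t (s x) (t y) w := by
  have := margS_pos hX s x
  have := margT_pos hY t y
  rw [liftST_apply]
  field_simp
  linear_combination -margSTW q s t (s x) (t y) w * mul_margS_mul_margT hs ht x y

lemma sum_liftST (hs : SuffS p s) (ht : SuffT p t) (hX : ∀ x, 0 < margX p x)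
    (hY : ∀ y, 0 < margY p y) (hmarg : ∀ x y, ∑ w, q (x, y, w) = p (x, y)) (x : 𝒳) (y : 𝒴) :
    ∑ w, liftST p s t q (x, y, w) = p (x, y) := by
  have := margS_pos hX s x
  have := margT_pos hY t y
  simp only [liftST_apply]
  rw [← sum_div, ← mul_sum, sum_margSTW hmarg]
  field_simp
  linear_combination -mul_margS_mul_margT hs ht x y

/-- `hmarkov` is the Markov chain `W - (S, T) - (X, Y)`. -/
lemma liftST_eq_self (hs : SuffS p s) (ht : SuffT p t) (hX : ∀ x, 0 < margX p x)
    (hY : ∀ y, 0 < margY p y) (hq : ∀ z, 0 ≤ q z) (hmarg : ∀ x y, ∑ w, q (x, y, w) = p (x, y))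
    (hmarkov : ∀ x y w, q (x, y, w) * margST p s t (s x, t y)
      = p (x, y) * margSTW q s t (s x) (t y) w) :
    liftST p s t q = q := by
  funext ⟨x, y, w⟩
  by_cases h : margST p s t (s x, t y) = 0
  · have hc : margSTW q s t (s x) (t y) w = 0 :=
      le_antisymm (h ▸ margSTW_le_margST hq hmarg _ _ w) (margSTW_nonneg hq _ _ w)
    rw [liftST_apply, hc, le_antisymm (hc ▸ le_margSTW hq x y w) (hq _)]
    simp
  · exact mul_right_cancel₀ h ((liftST_mul_margST hs ht hX hY x y w).trans (hmarkov x y w).symm)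

lemma isCondIndepST_of_isCondIndep (h : IsCondIndep q) : IsCondIndepST q s t := by
  intro x y w
  rw [margSW, margTW, sum_mul_sum, margSTW, sum_mul]
  exact sum_congr rfl fun x' _ => by rw [sum_mul]; exact sum_congr rfl fun y' _ => h x' y' w

lemma isCondIndep_liftST [Fintype 𝒮] [Fintype 𝒯] (hX : ∀ x, 0 < margX p x)
    (hY : ∀ y, 0 < margY p y) (h : IsCondIndepST q s t) : IsCondIndep (liftST p s t q) := by
  intro x y w
  have := margS_pos hX s x
  have := margT_pos hY t y
  rw [margXW_liftST hY, margYW_liftST hX, margW_liftST hX hY, liftST_apply]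
  field_simp
  linear_combination margX p x * margY p y * h x y w

lemma isMarkovSWT_liftST [Fintype 𝒮] [Fintype 𝒯] (hX : ∀ x, 0 < margX p x)
    (hY : ∀ y, 0 < margY p y) (h : IsCondIndepST q s t) : IsMarkovSWT p s t (liftST p s t q) := by
  intro x y w
  have := margS_pos hX s x
  have := margT_pos hY t y
  rw [margW_liftST hX hY, margSW_liftST hX hY, margTW_liftST hX hY, liftST_apply]
  field_simp
  linear_combination margX p x * margY p y * h x y w

lemma isCondIndepST_of_isMarkovSWT (hX : ∀ x, 0 < margX p x) (hY : ∀ y, 0 < margY p y)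
    (hq : liftST p s t q = q) (h : IsMarkovSWT p s t q) : IsCondIndepST q s t := by
  intro x y w
  have := margS_pos hX s x
  have := margT_pos hY t y
  have hxy := h x y w
  rw [← congrFun hq (x, y, w), liftST_apply] at hxy
  field_simp at hxy
  exact mul_left_cancel₀ (mul_pos (hX x) (hY y)).ne' (by linear_combination hxy)

end Lift

section Cost

variable {W : Type*} [Fintype 𝒳] [Fintype 𝒴] [Fintype W] {p : 𝒳 × 𝒴 → ℝ} {s : 𝒳 → 𝒮}
  {t : 𝒴 → 𝒯} {q : 𝒳 × 𝒴 × W → ℝ}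

lemma mapSnd_prodMap_eq_margSTW (q : 𝒳 × 𝒴 × W → ℝ) (s : 𝒳 → 𝒮) (t : 𝒴 → 𝒯) (w : W)
    (a : 𝒮) (b : 𝒯) :
    mapSnd (Prod.map s t) (fun z : W × (𝒳 × 𝒴) => q (z.2.1, z.2.2, z.1)) (w, (a, b))
      = margSTW q s t a b w := by
  simp only [mapSnd, margSTW, sum_filter, Fintype.sum_prod_type, Prod.map_apply, Prod.mk.injEq,
    ite_and, sum_ite_irrel, sum_const_zero]

lemma isPMF_of_sum_eq {q' : 𝒳 × 𝒴 × W → ℝ} (hq : IsPMF q) (hq' : ∀ z, 0 ≤ q' z)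
    (h : ∀ x y, ∑ w, q' (x, y, w) = ∑ w, q (x, y, w)) : IsPMF q' :=
  ⟨hq', by rw [← hq.2]; simp only [Fintype.sum_prod_type, h]⟩

variable [Fintype 𝒮] [Fintype 𝒯]

lemma mutInfo_margSTW_eq_mutInfo_mapSnd :
    mutInfo (fun z : (𝒮 × 𝒯) × W => margSTW q s t z.1.1 z.1.2 z.2)
      = mutInfo (mapSnd (Prod.map s t) (fun z : W × (𝒳 × 𝒴) => q (z.2.1, z.2.2, z.1))) := by
  rw [← mutInfo_comp_swap]
  congr
  funext z
  exact (mapSnd_prodMap_eq_margSTW q s t _ _ _).symm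

lemma mutInfo_margSTW_le (hq : ∀ z, 0 ≤ q z) :
    mutInfo (fun z : (𝒮 × 𝒯) × W => margSTW q s t z.1.1 z.1.2 z.2)
      ≤ mutInfo (fun z : W × (𝒳 × 𝒴) => q (z.2.1, z.2.2, z.1)) := by
  rw [mutInfo_margSTW_eq_mutInfo_mapSnd]
  exact mutInfo_mapSnd_le _ fun _ => hq _

lemma mutInfo_margSTW_eq (hq : ∀ z, 0 ≤ q z) (hmarg : ∀ x y, ∑ w, q (x, y, w) = p (x, y))
    (hmarkov : ∀ x y w, q (x, y, w) * margST p s t (s x, t y)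
      = p (x, y) * margSTW q s t (s x) (t y) w) :
    mutInfo (fun z : (𝒮 × 𝒯) × W => margSTW q s t z.1.1 z.1.2 z.2)
      = mutInfo (fun z : W × (𝒳 × 𝒴) => q (z.2.1, z.2.2, z.1)) := by
  rw [mutInfo_margSTW_eq_mutInfo_mapSnd]
  refine mutInfo_mapSnd_eq _ (fun _ => hq _) fun w ⟨x, y⟩ => ?_
  have hST : margY (mapSnd (Prod.map s t) (fun z : W × (𝒳 × 𝒴) => q (z.2.1, z.2.2, z.1)))
      (s x, t y) = margST p s t (s x, t y) := by
    simp only [margY, mapSnd_prodMap_eq_margSTW]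
    exact sum_margSTW hmarg _ _
  simp only [Prod.map_apply]
  rw [hST, mapSnd_prodMap_eq_margSTW]
  exact (hmarkov x y w).trans (congrArg (· * _) (hmarg x y).symm)

end Cost

theorem wyner_restricted_optimization_general
    [Fintype 𝒳] [Fintype 𝒴]
    [Fintype 𝒮] [Fintype 𝒯]
    (p : 𝒳 × 𝒴 → ℝ)
    (hX : ∀ x, 0 < margX p x) (hY : ∀ y, 0 < margY p y)
    (s : 𝒳 → 𝒮) (t : 𝒴 → 𝒯)
    (hs : SuffS p s) (ht : SuffT p t) :
    wynerCI p = sInf { c | ∃ (n : ℕ) (q : 𝒳 × 𝒴 × Fin n → ℝ),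
      IsPMF q ∧
      (∀ x y, ∑ w, q (x, y, w) = p (x, y)) ∧
      (∀ x y (w : Fin n), q (x, y, w) * margST p s t (s x, t y)
        = p (x, y) * margSTW q s t (s x) (t y) w) ∧
      (∀ x y (w : Fin n),
        q (x, y, w) * margS p s (s x) * margT p t (t y)
            * (∑ x', ∑ y', q (x', y', w))
          = margX p x * margY p y
            * (∑ x' ∈ Finset.univ.filter (fun x' => s x' = s x), ∑ y', q (x', y', w))
            * (∑ y' ∈ Finset.univ.filter (fun y' => t y' = t y), ∑ x', q (x', y', w))) ∧
      c = mutInfo (fun z : (𝒮 × 𝒯) × Fin n => margSTW q s t z.1.1 z.1.2 z.2) } := by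
  refine csInf_eq_csInf_of_forall_exists_le ?_ ?_
  · rintro _ ⟨n, q, hq, hmarg, hCI, rfl⟩
    have hST : IsCondIndepST q s t := isCondIndepST_of_isCondIndep hCI
    have hmarg' := sum_liftST hs ht hX hY hmarg
    refine ⟨_, ⟨n, liftST p s t q, isPMF_of_sum_eq hq (liftST_nonneg hX hY hq.1)
        fun x y => (hmarg' x y).trans (hmarg x y).symm, hmarg', fun x y w => ?_,
        isMarkovSWT_liftST hX hY hST, rfl⟩, ?_⟩
    · rw [margSTW_liftST hX hY]
      exact liftST_mul_margST hs ht hX hY x y w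
    · simp only [margSTW_liftST hX hY]
      exact mutInfo_margSTW_le hq.1
  · rintro _ ⟨n, q, hq, hmarg, hmarkov, hSWT, rfl⟩
    have hlift := liftST_eq_self hs ht hX hY hq.1 hmarg hmarkov
    have hCI := isCondIndep_liftST hX hY (isCondIndepST_of_isMarkovSWT hX hY hlift hSWT)
    exact ⟨_, ⟨n, q, hq, hmarg, hlift ▸ hCI, rfl⟩, (mutInfo_margSTW_eq hq.1 hmarg hmarkov).ge⟩

/-- Under sufficiency, Wyner's common information is achieved by
auxiliary variables `W` with `W - (S,T) - (X,Y)` and `X - S - W - T - Y`. -/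
theorem wyner_restricted_optimization
    [Fintype 𝒳] [Nonempty 𝒳] [Fintype 𝒴] [Nonempty 𝒴]
    [Fintype 𝒮] [Nonempty 𝒮] [Fintype 𝒯] [Nonempty 𝒯]
    (p : 𝒳 × 𝒴 → ℝ) (hp : IsPMF p)
    (hX : ∀ x, 0 < margX p x) (hY : ∀ y, 0 < margY p y)
    (s : 𝒳 → 𝒮) (t : 𝒴 → 𝒯)
    (hs : SuffS p s) (ht : SuffT p t) :
    wynerCI p = sInf { c | ∃ (n : ℕ) (q : 𝒳 × 𝒴 × Fin n → ℝ),
      IsPMF q ∧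
      (∀ x y, ∑ w, q (x, y, w) = p (x, y)) ∧
      (∀ x y (w : Fin n), q (x, y, w) * margST p s t (s x, t y)
        = p (x, y) * margSTW q s t (s x) (t y) w) ∧
      (∀ x y (w : Fin n),
        q (x, y, w) * margS p s (s x) * margT p t (t y)
            * (∑ x', ∑ y', q (x', y', w))
          = margX p x * margY p y
            * (∑ x' ∈ Finset.univ.filter (fun x' => s x' = s x), ∑ y', q (x', y', w))
            * (∑ y' ∈ Finset.univ.filter (fun y' => t y' = t y), ∑ x', q (x', y', w))) ∧
      c = mutInfo (fun z : (𝒮 × 𝒯) × Fin n => margSTW q s t z.1.1 z.1.2 z.2) } :=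
  wyner_restricted_optimization_general p hX hY s t hs ht

end
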